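/- Let π be an irreducible pair on a d-element alphabet, τ ∈ 𝒯⁺_π (i.e. Σ_{π₀(α)≤k} τ_α > 0 and Σ_{π₁(α)≤k} τ_α < 0 for 1 ≤ k < d), and let Ω_π be the matrix with Ω_{αβ} = +1 if π₁(α) > π₁(β), π₀(α) < π₀(β); −1 if π₁(α) < π₁(β), π₀(α) > π₀(β); 0 otherwise. Then all coordinates of h = −Ω_π τ are strictly positive. -/

import Mathlib

open Finset

/-!
Entrywise, `-Ω_π` is `[π₀ β < π₀ α] - [π₁ β < π₁ α]`, so `h_α` is the `π₀`-prefix sum of `τ` up to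
`π₀ α` minus the `π₁`-prefix sum up to `π₁ α`. The first is positive and the second negative unless
the prefix is empty; both prefixes are empty only if `α` comes first in both orders, and then the
prefix sums of length one both equal `τ_α`, which cannot be positive and negative at once.
-/

section TranslationMatrix

variable {A : Type*} {d : ℕ}

def translationMatrix (R : Type*) [Ring R] (π₀ π₁ : A ≃ Fin d) : Matrix A A R :=
  Matrix.of fun α β =>
    if π₁ β < π₁ α ∧ π₀ α < π₀ β then 1
    else if π₁ α < π₁ β ∧ π₀ β < π₀ α then -1 else 0

def prefixSum [Fintype A] {R : Type*} [AddCommMonoid R] (π : A ≃ Fin d) (τ : A → R) (k : ℕ) :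
    R :=
  ∑ α ∈ univ.filter (fun α => (π α : ℕ) < k), τ α

@[simp]
lemma prefixSum_zero [Fintype A] {R : Type*} [AddCommMonoid R] (π : A ≃ Fin d) (τ : A → R) :
    prefixSum π τ 0 = 0 := by
  simp [prefixSum]

lemma prefixSum_one_of_eq_zero [Fintype A] {R : Type*} [AddCommMonoid R] {π : A ≃ Fin d}
    (τ : A → R) {α : A} (hα : (π α : ℕ) = 0) : prefixSum π τ 1 = τ α := by
  have hfilter : univ.filter (fun β => (π β : ℕ) < 1) = {α} := by
    ext β
    simp only [mem_filter, mem_univ, true_and, mem_singleton, Nat.lt_one_iff]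
    refine ⟨fun hβ => π.injective (Fin.ext (hβ.trans hα.symm)), ?_⟩
    rintro rfl
    exact hα
  rw [prefixSum, hfilter, sum_singleton]

lemma neg_translationMatrix_apply {R : Type*} [Ring R] (π₀ π₁ : A ≃ Fin d) (α β : A) :
    -translationMatrix R π₀ π₁ α β =
      (if π₀ β < π₀ α then 1 else 0) - (if π₁ β < π₁ α then 1 else 0) := by
  rcases eq_or_ne β α with rfl | hne
  · simp [translationMatrix]
  have h₀ : π₀ β ≠ π₀ α := π₀.injective.ne hne
  have h₁ : π₁ β ≠ π₁ α := π₁.injective.ne hne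
  rcases h₀.lt_or_gt with h₀ | h₀ <;> rcases h₁.lt_or_gt with h₁ | h₁ <;>
    simp [translationMatrix, h₀, h₁, h₀.not_gt, h₁.not_gt]

lemma neg_translationMatrix_mulVec_apply [Fintype A] {R : Type*} [Ring R] (π₀ π₁ : A ≃ Fin d)
    (τ : A → R) (α : A) :
    (-((translationMatrix R π₀ π₁).mulVec τ)) α =
      prefixSum π₀ τ (π₀ α) - prefixSum π₁ τ (π₁ α) := by
  simp only [Pi.neg_apply, Matrix.mulVec, dotProduct, ← sum_neg_distrib, ← neg_mul,
    neg_translationMatrix_apply, sub_mul, ite_mul, one_mul, zero_mul, sum_sub_distrib,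
    prefixSum, sum_filter, Fin.lt_def]

end TranslationMatrix

theorem stmt_14_general {A : Type*} [Fintype A] (d : ℕ) (hd : 2 ≤ d)
    (π₀ π₁ : A ≃ Fin d)
    (Ω : Matrix A A ℝ)
    (hΩ : ∀ α β, Ω α β =
      if π₁ β < π₁ α ∧ π₀ α < π₀ β then 1
      else if π₁ α < π₁ β ∧ π₀ β < π₀ α then -1 else 0)
    (τ : A → ℝ)
    (hτ : ∀ k : ℕ, 0 < k → k < d →
      (0 < ∑ α ∈ Finset.univ.filter (fun α => (π₀ α : ℕ) < k), τ α) ∧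
      (∑ α ∈ Finset.univ.filter (fun α => (π₁ α : ℕ) < k), τ α < 0)) :
    ∀ α, 0 < (-(Ω.mulVec τ)) α := by
  intro α
  obtain rfl : Ω = translationMatrix ℝ π₀ π₁ := Matrix.ext hΩ
  have hτ' : ∀ k, 0 < k → k < d → 0 < prefixSum π₀ τ k ∧ prefixSum π₁ τ k < 0 := hτ
  rw [neg_translationMatrix_mulVec_apply]
  rcases Nat.eq_zero_or_pos (π₀ α) with h₀ | h₀ <;>
    rcases Nat.eq_zero_or_pos (π₁ α) with h₁ | h₁
  · have hτ₁ := hτ' 1 one_pos (by omega)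
    rw [prefixSum_one_of_eq_zero τ h₀, prefixSum_one_of_eq_zero τ h₁] at hτ₁
    exact absurd hτ₁.1 hτ₁.2.not_gt
  · rw [h₀, prefixSum_zero]
    linarith [(hτ' _ h₁ (π₁ α).isLt).2]
  · rw [h₁, prefixSum_zero]
    linarith [(hτ' _ h₀ (π₀ α).isLt).1]
  · linarith [(hτ' _ h₀ (π₀ α).isLt).1, (hτ' _ h₁ (π₁ α).isLt).2]

/-- For `τ ∈ 𝒯⁺_π` and the translation matrix `Ω_π`, all coordinates of `h = −Ω_π τ`
are strictly positive. -/
theorem stmt_14 {A : Type*} [Fintype A] [DecidableEq A] (d : ℕ) (hd : 2 ≤ d)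
    (π₀ π₁ : A ≃ Fin d)
    (Ω : Matrix A A ℝ)
    (hΩ : ∀ α β, Ω α β =
      if π₁ β < π₁ α ∧ π₀ α < π₀ β then 1
      else if π₁ α < π₁ β ∧ π₀ β < π₀ α then -1 else 0)
    (τ : A → ℝ)
    (hτ : ∀ k : ℕ, 0 < k → k < d →
      (0 < ∑ α ∈ Finset.univ.filter (fun α => (π₀ α : ℕ) < k), τ α) ∧
      (∑ α ∈ Finset.univ.filter (fun α => (π₁ α : ℕ) < k), τ α < 0)) :
    ∀ α, 0 < (-(Ω.mulVec τ)) α :=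
  stmt_14_general d hd π₀ π₁ Ω hΩ τ hτ
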